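/- arXiv:0910.4382 — 2 statements merged into one kernel-verified Lean document; each statement's English description precedes it below -/
import Mathlib

section
/- Let V be a 4-dimensional real vector space and let J : V → V be a linear endomorphism satisfying J ∘ J = −id_V. Then every 3-dimensional linear subspace U of V contains a unique J-invariant plane; that is, there is exactly one subspace P of V with P ≤ U, dim_ℝ P = 2, and J(P) ≤ P. -/
/-- Let `V` be a 4-dimensional real vector space and `J : V → V` a linear endomorphism
with `J ∘ J = -id`. Then every 3-dimensional subspace `U` of `V` contains a unique
`J`-invariant plane, i.e. a unique 2-dimensional subspace `P ≤ U` with `J(P) ≤ P`. -/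
theorem unique_invariant_plane_in_threedim_subspace
    (V : Type*) [AddCommGroup V] [Module ℝ V]
    (hV : Module.finrank ℝ V = 4)
    (J : V →ₗ[ℝ] V) (hJ : J ∘ₗ J = -LinearMap.id)
    (U : Submodule ℝ V) (hU : Module.finrank ℝ U = 3) :
    ∃! P : Submodule ℝ V,
      P ≤ U ∧ Module.finrank ℝ P = 2 ∧ Submodule.map J P ≤ P := by
  have hfd : FiniteDimensional ℝ V := FiniteDimensional.of_finrank_pos (by rw [hV]; norm_num)
  -- J as an equivalence
  have h1 : J ∘ₗ (-J) = LinearMap.id := by rw [LinearMap.comp_neg, hJ, neg_neg]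
  have h2 : (-J) ∘ₗ J = LinearMap.id := by rw [LinearMap.neg_comp, hJ, neg_neg]
  let e : V ≃ₗ[ℝ] V := LinearEquiv.ofLinear J (-J) h1 h2
  have he : (e : V →ₗ[ℝ] V) = J := rfl
  have hmapfr : ∀ W : Submodule ℝ V, Module.finrank ℝ (W.map J) = Module.finrank ℝ W := by
    intro W
    rw [← he]
    exact LinearEquiv.finrank_map_eq e W
  have hJJ : ∀ W : Submodule ℝ V, (W.map J).map J = W := by
    intro W
    rw [← Submodule.map_comp, hJ]
    ext x
    constructor
    · rintro ⟨y, hy, rfl⟩; simpa using W.neg_mem hy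
    · intro hx; exact ⟨-x, W.neg_mem hx, by simp⟩
  set Q := U ⊓ U.map J with hQ
  have hQinv : Q.map J ≤ Q := by
    refine le_trans (Submodule.map_inf_le J) ?_
    rw [hJJ U]
    exact le_of_eq (inf_comm _ _)
  have hQle : Q ≤ U := inf_le_left
  have hdim2 : Module.finrank ℝ Q = 2 := by
    have hsum := Submodule.finrank_sup_add_finrank_inf_eq U (U.map J)
    rw [← hQ] at hsum
    have hsup : Module.finrank ℝ ↥(U ⊔ U.map J) ≤ 4 := hV ▸ Submodule.finrank_le _
    have hmap3 : Module.finrank ℝ (U.map J) = 3 := by rw [hmapfr, hU]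
    have hle3 : Module.finrank ℝ Q ≤ 3 := hU ▸ Submodule.finrank_mono hQle
    have hge2 : 2 ≤ Module.finrank ℝ Q := by omega
    -- exclude dim 3
    rcases lt_or_eq_of_le hle3 with h | h3
    · omega
    · exfalso
      have hQU : Q = U := Submodule.eq_of_le_of_finrank_eq hQle (by rw [h3, hU])
      have hUinv : ∀ x ∈ U, J x ∈ U := by
        intro x hx
        have : J x ∈ Q.map J := Submodule.mem_map_of_mem (hQU ▸ hx)
        exact hQle (hQinv this)
      -- restrict J to U, det squared = -1
      let Jr := J.restrict hUinv
      have hJr : Jr ∘ₗ Jr = -LinearMap.id := by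
        ext ⟨x, hx⟩
        have := congrFun (congrArg (fun f => f.toFun) hJ) x
        simpa [Jr, LinearMap.restrict_apply, Subtype.ext_iff] using this
      have hdet : LinearMap.det Jr * LinearMap.det Jr = -1 := by
        have := congrArg LinearMap.det hJr
        rw [LinearMap.det_comp] at this
        rw [this]
        have : LinearMap.det (-LinearMap.id : U →ₗ[ℝ] U) = (-1) ^ Module.finrank ℝ U := by
          rw [show (-LinearMap.id : U →ₗ[ℝ] U) = (-1 : ℝ) • LinearMap.id by ext x; simp]
          rw [LinearMap.det_smul, LinearMap.det_id, mul_one]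
        rw [this, hU]
        norm_num
      nlinarith [sq_nonneg (LinearMap.det Jr)]
  refine ⟨Q, ⟨hQle, hdim2, hQinv⟩, ?_⟩
  rintro P ⟨hPU, hP2, hPinv⟩
  have hPeq : P.map J = P := Submodule.eq_of_le_of_finrank_eq hPinv (by rw [hmapfr])
  have hPQ : P ≤ Q := le_inf hPU (hPeq ▸ Submodule.map_mono hPU)
  exact Submodule.eq_of_le_of_finrank_eq hPQ (by rw [hP2, hdim2])
end

section
/- Let V be a 4-dimensional real vector space, let J : V → V be a linear endomorphism with J ∘ J = −id_V, and let U be a 3-dimensional linear subspace of V. Then the subspace U ⊓ J(U) is 2-dimensional and J-invariant: dim_ℝ (U ⊓ J(U)) = 2 and J(U ⊓ J(U)) = U ⊓ J(U). -/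
/-- Let `V` be a 4-dimensional real vector space, `J : V → V` linear with `J ∘ J = -id`,
and `U` a 3-dimensional subspace.  Then `U ⊓ J(U)` is 2-dimensional and `J`-invariant:
`dim (U ⊓ J(U)) = 2` and `J(U ⊓ J(U)) = U ⊓ J(U)`. -/
theorem inf_map_is_invariant_plane
    (V : Type*) [AddCommGroup V] [Module ℝ V]
    (hV : Module.finrank ℝ V = 4)
    (J : V →ₗ[ℝ] V) (hJ : J ∘ₗ J = -LinearMap.id)
    (U : Submodule ℝ V) (hU : Module.finrank ℝ U = 3) :
    Module.finrank ℝ ↥(U ⊓ Submodule.map J U) = 2 ∧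
      Submodule.map J (U ⊓ Submodule.map J U) = U ⊓ Submodule.map J U := by
  have hFD : FiniteDimensional ℝ V := Module.finite_of_finrank_pos (by omega)
  have hJJ : ∀ x, J (J x) = -x := by
    intro x
    have := congrArg (fun f => f x) hJ
    simpa using this
  -- J as a linear equivalence
  let e : V ≃ₗ[ℝ] V := LinearEquiv.ofLinear J (-J)
    (by ext x; simp [hJJ x])
    (by ext x; simp [hJJ x])
  have heJ : (e : V →ₗ[ℝ] V) = J := rfl
  have hinj : Function.Injective J := by
    rw [← heJ]; exact e.injective
  have hmapJJ : Submodule.map J (Submodule.map J U) = U := by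
    ext x
    simp only [Submodule.mem_map]
    constructor
    · rintro ⟨y, ⟨z, hz, rfl⟩, rfl⟩
      rw [hJJ z]
      exact U.neg_mem hz
    · intro hx
      exact ⟨J (-x), ⟨-x, U.neg_mem hx, rfl⟩, by rw [hJJ]; simp⟩
  have hrankJU : Module.finrank ℝ (Submodule.map J U) = 3 := by
    rw [← heJ, LinearEquiv.finrank_map_eq, hU]
  -- dimension count
  have hsum := Submodule.finrank_sup_add_finrank_inf_eq U (Submodule.map J U)
  have hle4 : Module.finrank ℝ ↥(U ⊔ Submodule.map J U) ≤ 4 := by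
    rw [← hV]; exact Submodule.finrank_le _
  have hinf_le : Module.finrank ℝ ↥(U ⊓ Submodule.map J U) ≤ 3 := by
    rw [← hU]; exact Submodule.finrank_mono inf_le_left
  have hne3 : Module.finrank ℝ ↥(U ⊓ Submodule.map J U) ≠ 3 := by
    intro h3
    have hinfU : U ⊓ Submodule.map J U = U :=
      Submodule.eq_of_le_of_finrank_eq inf_le_left (by rw [h3, hU])
    have hUle : U ≤ Submodule.map J U := by
      conv_lhs => rw [← hinfU]
      exact inf_le_right
    have hUeq : U = Submodule.map J U :=
      Submodule.eq_of_le_of_finrank_eq hUle (by rw [hU, hrankJU])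
    have hmem : ∀ x ∈ U, J x ∈ U := by
      intro x hx
      rw [hUeq]
      exact ⟨x, hx, rfl⟩
    set g : U →ₗ[ℝ] U := J.restrict hmem with hg
    have hgg : g ∘ₗ g = -LinearMap.id := by
      ext x
      simp [hg, LinearMap.restrict_apply, hJJ]
    have hdet : LinearMap.det g * LinearMap.det g = -1 := by
      rw [← LinearMap.det_comp, hgg]
      have hni : (-LinearMap.id : ↥U →ₗ[ℝ] ↥U) = (-1 : ℝ) • LinearMap.id := by
        ext x; simp
      rw [hni, LinearMap.det_smul, LinearMap.det_id, hU]
      norm_num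
    nlinarith [mul_self_nonneg (LinearMap.det g)]
  constructor
  · omega
  · have hmapinf : Submodule.map J (U ⊓ Submodule.map J U) =
        Submodule.map J U ⊓ Submodule.map J (Submodule.map J U) :=
      Submodule.map_inf J hinj
    rw [hmapinf, hmapJJ, inf_comm]
end
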